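/- For every ordinal α with ω₁ ≤ α < ω₂, if g : ω₁ → α is a bijection, then the function f : ω₁ → Ord defined by f(β) = order type of g[β] is a canonical function for α. -/

import Mathlib

open ZFSet FirstOrder

namespace P746

/-! ## First-order language with membership and a wellordering predicate -/

/-- The language with two binary relation symbols: `∈` and a wellordering `<*`. -/
def L : FirstOrder.Language where
  Functions := fun _ => Empty
  Relations := fun n => match n with
    | 2 => Fin 2
    | _ => Empty

open Classical in
/-- The `L`-structure on (the members of) a ZF-set `M`, interpreting the first relation
as membership and the second as a given relation `r`. -/
def mStruc (M : ZFSet) (r : ZFSet → ZFSet → Prop) : L.Structure M.toSet where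
  funMap := fun f _ => f.elim
  RelMap := fun {n} => match n with
    | 0 => fun R _ => R.elim
    | 1 => fun R _ => R.elim
    | 2 => fun R v => if R = (0 : Fin 2) then ((v 0 : ZFSet) ∈ (v 1 : ZFSet)) else r (v 0) (v 1)
    | (_+3) => fun R _ => R.elim

/-- `X` is an elementary substructure of `(M, ∈, r)`: `X ⊆ M` and every first-order formula
with parameters from `X` holds in `X` iff it holds in `M`. -/
def ElemSub (M : ZFSet) (r : ZFSet → ZFSet → Prop) (X : ZFSet) : Prop :=
  ∃ h : X ⊆ M,
    ∀ (n : ℕ) (φ : L.Formula (Fin n)) (v : Fin n → X.toSet),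
      (letI := mStruc M r
       φ.Realize (fun i => (⟨(v i : ZFSet), h (v i).2⟩ : M.toSet))) ↔
      (letI := mStruc X r; φ.Realize v)

/-- `r` is a wellordering of the members of `S`. -/
def WOn (S : ZFSet) (r : ZFSet → ZFSet → Prop) : Prop :=
  IsWellOrder S.toSet (Subrel r S.toSet)

/-! ## Basic set-theoretic notions inside `ZFSet` -/

/-- `x` is a (von Neumann) ordinal: a transitive set of transitive sets. -/
def IsOrd (x : ZFSet) : Prop :=
  x.IsTransitive ∧ ∀ y ∈ x.toSet, ZFSet.IsTransitive y

/-- `w` is the first uncountable ordinal `ω₁`. -/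
def IsOmega1 (w : ZFSet) : Prop :=
  IsOrd w ∧ ¬ w.toSet.Countable ∧ ∀ y ∈ w.toSet, y.toSet.Countable

/-- The set `[x]^{<ω}` of finite subsets of `x`. -/
noncomputable def finPow (x : ZFSet) : ZFSet :=
  ZFSet.sep (fun a => a.toSet.Finite) x.powerset

/-- The set `[x]^n` of subsets of `x` of size `n`. -/
noncomputable def finPowCard (x : ZFSet) (n : ℕ) : ZFSet :=
  ZFSet.sep (fun a => a.toSet.Finite ∧ a.toSet.ncard = n) x.powerset

/-- `D^X_η`: the set of finite `a ⊆ η` such that `f(a) ∈ X` for every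
`f : [η]^{|a|} → ω₁` belonging to `X` (`w` stands for `ω₁`). -/
def Dset (w X η : ZFSet) : Set ZFSet :=
  {a | a ∈ finPow η ∧ ∀ f ∈ X.toSet, ZFSet.IsFunc (finPowCard η a.toSet.ncard) w f →
    ∀ v : ZFSet, ZFSet.pair a v ∈ f → v ∈ X}

/-- The Skolem hull of `X ∪ z` in `M` (with functions on `[η]^{<ω}`):
`X` together with all values `f(a)` for `f : [η]^{<ω} → M` in `X` and finite `a ⊆ z`. -/
def SkHull (M η X z : ZFSet) : Set ZFSet :=
  X.toSet ∪ {y | ∃ f ∈ X.toSet, ZFSet.IsFunc (finPow η) M f ∧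
    ∃ a : ZFSet, a ∈ finPow η ∧ a ⊆ z ∧ ZFSet.pair a y ∈ f}

/-- `x` is hereditarily of cardinality less than `κ`. -/
def HerLt (κ : Cardinal) (x : ZFSet) : Prop :=
  ZFSet.mem_wf.fix (C := fun _ => Prop)
    (fun y ih => Cardinal.mk y.toSet < κ ∧ ∀ z, ∀ h : z ∈ y, ih z h) x

/-- `H` is the collection `H(κ)` of sets hereditarily of cardinality `< κ`. -/
def IsHCard (κ : Cardinal) (H : ZFSet) : Prop :=
  ∀ x : ZFSet, x ∈ H ↔ HerLt κ x

/-! ## Clubs, stationarity and canonical functions on `ω₁` -/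

noncomputable def omega1 : Ordinal.{0} := (Cardinal.aleph 1).ord
noncomputable def omega2 : Ordinal.{0} := (Cardinal.aleph 2).ord

/-- `C` is a club (closed unbounded) subset of `ω₁`. -/
def IsClub (C : Set Ordinal.{0}) : Prop :=
  C ⊆ Set.Iio omega1 ∧
  (∀ o, o < omega1 → Order.IsSuccLimit o → (∀ b, b < o → ∃ c ∈ C, b ≤ c ∧ c < o) → o ∈ C) ∧
  (∀ b, b < omega1 → ∃ c ∈ C, b < c ∧ c < omega1)

/-- `S` is a stationary subset of `ω₁`. -/
def IsStat (S : Set Ordinal.{0}) : Prop :=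
  ∀ C, IsClub C → (S ∩ C).Nonempty

/-- `f ≤ g` on a club. -/
def BddOnClub (f g : Ordinal.{0} → Ordinal.{0}) : Prop :=
  ∃ C, IsClub C ∧ ∀ α ∈ C, f α ≤ g α

/-- `f < g` on a club. -/
def LtOnClub (f g : Ordinal.{0} → Ordinal.{0}) : Prop :=
  ∃ C, IsClub C ∧ ∀ α ∈ C, f α < g α

/-- `f` is a canonical function for `γ`: it is above every canonical function for every `β < γ`
(mod clubs), and minimally so.  (This is the standard recursive characterization of the
statement that the empty condition in `P(ω₁)/NS_{ω₁}` forces `j(f)(ω₁^V) = γ`.) -/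
def Canonical : Ordinal.{0} → (Ordinal.{0} → Ordinal.{0}) → Prop :=
  Ordinal.lt_wf.fix (C := fun _ => (Ordinal.{0} → Ordinal.{0}) → Prop)
    (fun γ ih f =>
      (∀ β, ∀ hβ : β < γ, ∀ g, ih β hβ g → LtOnClub g f) ∧
      ∀ h : Ordinal.{0} → Ordinal.{0},
        (∀ β, ∀ hβ : β < γ, ∀ g, ih β hβ g → LtOnClub g h) → BddOnClub f h)

/-- Every `f : ω₁ → ω₁` is bounded on a club by a canonical function for some `γ < ω₂`. -/
def Bounding : Prop :=
  ∀ f : Ordinal.{0} → Ordinal.{0}, (∀ α, α < omega1 → f α < omega1) →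
    ∃ γ, γ < omega2 ∧ ∃ g, Canonical γ g ∧ BddOnClub f g

/-- `o` is the order type of the set of ordinals `s`: there is a strictly increasing
enumeration of `s` indexed by the ordinals below `o`. -/
def IsOtypOf (o : Ordinal.{0}) (s : Set Ordinal.{0}) : Prop :=
  ∃ e : Ordinal.{0} → Ordinal.{0},
    (∀ i j, i < j → j < o → e i < e j) ∧
    (∀ i, i < o → e i ∈ s) ∧ ∀ x ∈ s, ∃ i, i < o ∧ e i = x

/-! ## Trees on `ω × ω` and `ω × Ord` (as sets of pairs of lists) -/

def IsTreeN (S : Set (List ℕ × List ℕ)) : Prop :=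
  ∀ p ∈ S, p.1.length = p.2.length ∧ ∀ n : ℕ, (p.1.take n, p.2.take n) ∈ S

def IsTreeO (T : Set (List ℕ × List Ordinal.{0})) : Prop :=
  ∀ p ∈ T, p.1.length = p.2.length ∧ ∀ n : ℕ, (p.1.take n, p.2.take n) ∈ T

/-- Projection of a tree on `ω × ω`. -/
def projN (S : Set (List ℕ × List ℕ)) : Set (ℕ → ℕ) :=
  {x | ∃ y : ℕ → ℕ, ∀ n : ℕ,
    (List.ofFn (fun i : Fin n => x i), List.ofFn (fun i : Fin n => y i)) ∈ S}

/-- Projection of a tree on `ω × Ord`. -/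
def projO (T : Set (List ℕ × List Ordinal.{0})) : Set (ℕ → ℕ) :=
  {x | ∃ y : ℕ → Ordinal.{0}, ∀ n : ℕ,
    (List.ofFn (fun i : Fin n => x i), List.ofFn (fun i : Fin n => y i)) ∈ T}

/-- Projection of the restricted tree `T ↾ (ω × α)`. -/
def projOBelow (T : Set (List ℕ × List Ordinal.{0})) (α : Ordinal.{0}) : Set (ℕ → ℕ) :=
  {x | ∃ y : ℕ → Ordinal.{0}, (∀ i, y i < α) ∧ ∀ n : ℕ,
    (List.ofFn (fun i : Fin n => x i), List.ofFn (fun i : Fin n => y i)) ∈ T}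

/-! ## Names, evaluation, and generic extensions -/

open Classical in
/-- Evaluation of a `P`-name `τ` by a filter `G`:
`val G τ = { val G σ : ∃ p ∈ G, (σ, p) ∈ τ }`, by recursion on rank. -/
noncomputable def val (G : ZFSet) : ZFSet → ZFSet :=
  WellFounded.fix (InvImage.wf ZFSet.rank Ordinal.lt_wf)
    (fun τ ih =>
      ZFSet.sUnion <| ZFSet.sep
        (fun y => ∃ z ∈ τ.toSet,
          if h : ∃ σ, ZFSet.rank σ < ZFSet.rank τ ∧ ∃ p ∈ G.toSet, z = ZFSet.pair σ p
          then y = {ih h.choose h.choose_spec.1}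
          else y = ∅)
        (ZFSet.powerset (ZFSet.sUnion (ZFSet.sUnion (ZFSet.sUnion τ)))))

/-- The universe is a generic extension `V[G]` of the transitive class `V` by the
partial order `(P, ≤)` (with `le` the set of pairs `(p,q)` with `p ≤ q`), `G ⊆ P`
a filter meeting every dense subset of `P` lying in `V`, and every set being the
value of a `P`-name in `V`. -/
def IsGenericExt (V : Set ZFSet) (P le G : ZFSet) : Prop :=
  (∀ x ∈ V, ∀ y, y ∈ x → y ∈ V) ∧ P ∈ V ∧ le ∈ V ∧
  (∀ p, p ∈ P → ZFSet.pair p p ∈ le) ∧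
  (∀ p q z, ZFSet.pair p q ∈ le → ZFSet.pair q z ∈ le → ZFSet.pair p z ∈ le) ∧
  (∀ p q, ZFSet.pair p q ∈ le → p ∈ P ∧ q ∈ P) ∧
  G ⊆ P ∧ G ≠ ∅ ∧
  (∀ p q, p ∈ G → q ∈ G → ∃ r, r ∈ G ∧ ZFSet.pair r p ∈ le ∧ ZFSet.pair r q ∈ le) ∧
  (∀ p q, p ∈ G → q ∈ P → ZFSet.pair p q ∈ le → q ∈ G) ∧
  (∀ D, D ∈ V → D ⊆ P → (∀ p, p ∈ P → ∃ q, q ∈ D ∧ ZFSet.pair q p ∈ le) →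
    ∃ q, q ∈ G ∧ q ∈ D) ∧
  (∀ x : ZFSet, ∃ τ, τ ∈ V ∧ x = val G τ)

/-- In the generic extension, the forcing added no new `ω`-sequences of ordinals;
i.e. `P` is `(ω, ∞)`-distributive. -/
def Distributive (V : Set ZFSet) : Prop :=
  ∀ f o : ZFSet, (o.IsTransitive ∧ ∀ y ∈ o.toSet, ZFSet.IsTransitive y) →
    ZFSet.IsFunc ZFSet.omega o f → f ∈ V

/-! ## Ultrafilters and completeness -/

/-- `U` is an ultrafilter on the set `S`. -/
def IsUltraOn (S U : ZFSet) : Prop :=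
  U ⊆ S.powerset ∧ S ∈ U ∧ (∅ : ZFSet) ∉ U ∧
  (∀ A B, A ∈ U → A ⊆ B → B ⊆ S → B ∈ U) ∧
  (∀ A B, A ∈ U → B ∈ U → A ∩ B ∈ U) ∧
  (∀ A, A ⊆ S → (A ∈ U ∨ ZFSet.sep (fun x => x ∉ A) S ∈ U))

/-- `U` is `γ`-complete with respect to families of members of `U` lying in `W`. -/
def CompleteOn (W : Set ZFSet) (γ : Cardinal.{1}) (S U : ZFSet) : Prop :=
  ∀ F, F ∈ W → F ≠ ∅ → F ⊆ U → Cardinal.mk F.toSet < γ →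
    ZFSet.sep (fun x => ∀ A ∈ F.toSet, x ∈ A) S ∈ U

/-! ## Internal finite sequences, trees and homogeneity -/

/-- The set `κ^{<ω}` of finite sequences from `κ` (functions `n → κ`, `n < ω`). -/
noncomputable def seqs (κ : ZFSet) : ZFSet :=
  ZFSet.sep (fun f => ∃ n, n ∈ ZFSet.omega ∧ ZFSet.IsFunc n κ f)
    (((κ ∪ ZFSet.omega).powerset.powerset).powerset)

/-- The set of functions `a → b` as a ZF-set. -/
noncomputable def funsZ (a b : ZFSet) : ZFSet :=
  ZFSet.sep (fun f => ZFSet.IsFunc a b f) (((a ∪ b).powerset.powerset).powerset)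

/-- Restriction of a (set-)function `f` to `m`. -/
noncomputable def restr (f m : ZFSet) : ZFSet :=
  ZFSet.sep (fun p => ∃ i v, i ∈ m ∧ p = ZFSet.pair i v) f

/-- `T` is a tree on `ω × κ`: a set of pairs of finite sequences of equal length,
closed under restriction. -/
def IsTreeZ (κ T : ZFSet) : Prop :=
  ∀ z, z ∈ T → ∃ n s t, n ∈ ZFSet.omega ∧ ZFSet.IsFunc n ZFSet.omega s ∧
    ZFSet.IsFunc n κ t ∧ z = ZFSet.pair s t ∧
    ∀ m, m ∈ n → ZFSet.pair (restr s m) (restr t m) ∈ T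

/-- `x ∈ p[T]`, computed in `W`: there is a branch witness `y ∈ W`. -/
def inProjZ (W : Set ZFSet) (κ T x : ZFSet) : Prop :=
  ∃ y, y ∈ W ∧ ZFSet.IsFunc ZFSet.omega κ y ∧
    ∀ n, n ∈ ZFSet.omega → ZFSet.pair (restr x n) (restr y n) ∈ T

/-- `x ∈ p[T ↾ (ω × A)]` where the branch takes values satisfying `Q`. -/
def inProjVal (κ T x : ZFSet) (Q : ZFSet → Prop) : Prop :=
  ∃ y, ZFSet.IsFunc ZFSet.omega κ y ∧ (∀ i v, ZFSet.pair i v ∈ y → Q v) ∧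
    ∀ n, n ∈ ZFSet.omega → ZFSet.pair (restr x n) (restr y n) ∈ T

/-- The tower `⟨π(x ↾ k) : k < ω⟩` is countably complete, relativized to `W`. -/
def CCTower (W : Set ZFSet) (κ π x : ZFSet) : Prop :=
  ∀ Af, Af ∈ W → ZFSet.IsFunc ZFSet.omega ((seqs κ).powerset) Af →
    (∀ n U a, n ∈ ZFSet.omega → ZFSet.pair (restr x n) U ∈ π →
      ZFSet.pair n a ∈ Af → a ∈ U) →
    ∃ y, y ∈ W ∧ ZFSet.IsFunc ZFSet.omega κ y ∧
      ∀ n a, n ∈ ZFSet.omega → ZFSet.pair n a ∈ Af → restr y n ∈ a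

/-- `(T, π)` is a `γ`-homogeneous tree system on `ω × κ`, relativized to the class `W`. -/
def HomSys (W : Set ZFSet) (γ : Cardinal.{1}) (κ T π : ZFSet) : Prop :=
  IsTreeZ κ T ∧
  (∀ z, z ∈ π → ∃ n s U, n ∈ ZFSet.omega ∧ ZFSet.IsFunc n ZFSet.omega s ∧
    z = ZFSet.pair s U ∧ IsUltraOn (funsZ n κ) U ∧ CompleteOn W γ (funsZ n κ) U ∧
    ZFSet.sep (fun t => ZFSet.pair s t ∈ T) (funsZ n κ) ∈ U) ∧
  (∀ s U U', ZFSet.pair s U ∈ π → ZFSet.pair s U' ∈ π → U = U') ∧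
  (∀ x, x ∈ W → ZFSet.IsFunc ZFSet.omega ZFSet.omega x →
    (inProjZ W κ T x ↔
      ((∀ n, n ∈ ZFSet.omega → ∃ U, ZFSet.pair (restr x n) U ∈ π) ∧ CCTower W κ π x)))

/-- `A` is a `γ`-homogeneously Suslin set of reals, in the sense of the class `W`. -/
def HomSuslinIn (W : Set ZFSet) (γ : Cardinal.{1}) (A : ZFSet) : Prop :=
  A ⊆ funsZ ZFSet.omega ZFSet.omega ∧
  ∃ κ T π, κ ∈ W ∧ T ∈ W ∧ π ∈ W ∧
    (κ.IsTransitive ∧ ∀ y ∈ κ.toSet, ZFSet.IsTransitive y) ∧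
    HomSys W γ κ T π ∧
    ∀ x, ZFSet.IsFunc ZFSet.omega ZFSet.omega x → (x ∈ A ↔ inProjZ W κ T x)


/-! ## Additional notions -/

/-- `γ` is a regular (limit) cardinal, as a ZF-set ordinal: the range of any function
from a smaller ordinal into `γ` is bounded. -/
def IsRegOrd (γ : ZFSet) : Prop :=
  IsOrd γ ∧ (∀ o ∈ γ.toSet, ∃ o' ∈ γ.toSet, o ∈ o') ∧
  ∀ b f, b ∈ γ → ZFSet.IsFunc b γ f → ∃ o ∈ γ.toSet, ∀ x v, ZFSet.pair x v ∈ f → v ∈ o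

/-- `Y` is a minimal `(η, λ)`-extension of `X` (inside the model `M` with wellordering `r`):
`Y ≺ M`, `Y ∩ η = X ∩ η`, and `Y` is the Skolem hull of `X ∪ A` for some `A ⊆ λ`. -/
def IsMinExt (M : ZFSet) (r : ZFSet → ZFSet → Prop) (η lam X Y : ZFSet) : Prop :=
  ElemSub M r Y ∧ Y ∩ η = X ∩ η ∧ ∃ A : ZFSet, A ⊆ lam ∧ Y.toSet = SkHull M lam X A

/-- `U` is a normal measure on the (measurable) cardinal `λ`. -/
def IsNormalMeasure (lam U : ZFSet) : Prop :=
  IsOrd lam ∧ IsUltraOn lam U ∧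
  CompleteOn Set.univ (Cardinal.mk lam.toSet) lam U ∧
  (∀ x, x ∈ lam → ({x} : ZFSet) ∉ U) ∧
  ∀ f A, A ∈ U → ZFSet.IsFunc lam lam f →
    (∀ x v, x ∈ A → ZFSet.pair x v ∈ f → (v ∈ x ∨ x = ∅)) →
    ∃ B c, B ∈ U ∧ ∀ x, x ∈ B → ZFSet.pair x c ∈ f

/-- `g` is the `ξ`-th ordinal of `M` (counting from `0`): the ordinals of `M` below `g`
have order type `ξ`. -/
def NthOrdOf (M : ZFSet) (ξ : Ordinal.{0}) (g : ZFSet) : Prop :=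
  IsOrd g ∧ g ∈ M ∧
  IsOtypOf ξ (ZFSet.rank '' {x : ZFSet | x ∈ M.toSet ∧ IsOrd x ∧ x ∈ g})

/-- The relation `≤_o` on a tree `T` on `ω × ω₁`: one sequence extends the other, and
the first coordinate of the last element of the longer one codes that the length of the
first is below the length of the second in the coded ordering.  (`decode k m n` means:
the value `k` codes `m` before `n`.) -/
def leO (T : Set (List ℕ × List Ordinal.{0})) (decode : ℕ → ℕ → ℕ → Prop)
    (p q : List ℕ × List Ordinal.{0}) : Prop :=
  p ∈ T ∧ q ∈ T ∧
  ((p.1 <+: q.1 ∧ p.2 <+: q.2 ∧ p.1.length < q.1.length ∧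
      decode (q.1.getD (q.1.length - 1) 0) p.1.length q.1.length) ∨
   (q.1 <+: p.1 ∧ q.2 <+: p.2 ∧ q.1.length < p.1.length ∧
      decode (p.1.getD (p.1.length - 1) 0) p.1.length q.1.length))

/-- The binary relation on `ω` coded by `x : ω → ω`:  comparisons of `n` with smaller
numbers are decided by `x (n - 1)`. -/
def codedRel (decode : ℕ → ℕ → ℕ → Prop) (x : ℕ → ℕ) (m n : ℕ) : Prop :=
  (m < n ∧ decode (x (n - 1)) m n) ∨ (n < m ∧ decode (x (m - 1)) m n)

/-!
By induction on `ξ`: if `g` maps `ω₁` onto a superset of `ξ`, then `β ↦ otp (g[β] ∩ ξ)` is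
canonical for `ξ`; for `ξ = α` this function agrees with `f` below `ω₁`. Each `ζ < ξ` is `g β₀`
for some `β₀ < ω₁`, and for `β > β₀` the set `g[β] ∩ ζ` is a proper initial segment of
`g[β] ∩ ξ`; as canonical functions are unique modulo clubs, every canonical function for `ζ` is
eventually below ours. Conversely, if `h` eventually dominates every canonical function for every
`ζ < ξ`, then for each `γ < ω₁` with `g γ < ξ` it dominates `β ↦ otp (g[β] ∩ g γ)` on a club
`C_γ`. On the diagonal intersection of the `C_γ` every proper initial segment of `g[β] ∩ ξ` has
order type below `h β`, so `otp (g[β] ∩ ξ) ≤ h β`.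
-/

open Set Filter Order

section Club

lemma omega1_eq : omega1 = Ordinal.omega 1 :=
  Cardinal.ord_aleph 1

lemma succ_lt_omega1 {a : Ordinal.{0}} (ha : a < omega1) : succ a < omega1 :=
  (Cardinal.isSuccLimit_ord (Cardinal.aleph0_le_aleph 1)).succ_lt ha

lemma countable_Iio_of_lt_omega1 {x : Ordinal.{0}} (hx : x < omega1) : (Iio x).Countable := by
  rw [← Cardinal.le_aleph0_iff_set_countable, Cardinal.mk_Iio_ordinal, Cardinal.lift_le_aleph0,
    ← Cardinal.lt_aleph_one_iff]
  exact Cardinal.lt_ord.1 hx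

lemma iSup_lt_omega1 {u : ℕ → Ordinal.{0}} (hu : ∀ n, u n < omega1) : (⨆ n, u n) < omega1 := by
  simp only [omega1_eq] at hu ⊢
  exact Ordinal.iSup_lt_omega_one hu

lemma lt_iSup_of_strictMono {u : ℕ → Ordinal.{0}} (hu : StrictMono u) (n : ℕ) :
    u n < ⨆ n, u n :=
  (hu n.lt_succ_self).trans_le (Ordinal.le_iSup u (n + 1))

lemma isSuccLimit_iSup_of_strictMono {u : ℕ → Ordinal.{0}} (hu : StrictMono u) :
    IsSuccLimit (⨆ n, u n) := by
  by_contra h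
  obtain ⟨n, hn⟩ := exists_eq_ciSup_of_not_isSuccLimit Ordinal.bddAbove_of_small h
  exact (lt_iSup_of_strictMono hu n).ne hn

lemma isClub_Iio_omega1 : IsClub (Iio omega1) :=
  ⟨subset_rfl, fun _ ho _ _ => ho, fun b hb => ⟨succ b, succ_lt_omega1 hb, lt_succ b,
    succ_lt_omega1 hb⟩⟩

lemma isClub_Ioo {a : Ordinal.{0}} (ha : a < omega1) : IsClub (Ioo a omega1) := by
  refine ⟨Ioo_subset_Iio_self, fun o ho hlim hcof => ?_, fun b hb => ?_⟩
  · obtain ⟨c, hc, -, hco⟩ := hcof 0 hlim.bot_lt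
    exact ⟨hc.1.trans hco, ho⟩
  · have hab : succ (max a b) < omega1 := succ_lt_omega1 (max_lt ha hb)
    exact ⟨succ (max a b), ⟨(le_max_left a b).trans_lt (lt_succ _), hab⟩,
      (le_max_right a b).trans_lt (lt_succ _), hab⟩

lemma IsClub.iSup_mem {C : Set Ordinal.{0}} (hC : IsClub C) {u : ℕ → Ordinal.{0}}
    (hu : StrictMono u) (hlt : ∀ n, u n < omega1) (hfreq : ∀ m, ∃ n, m ≤ n ∧ u n ∈ C) :
    (⨆ n, u n) ∈ C := by
  refine hC.2.1 _ (iSup_lt_omega1 hlt) (isSuccLimit_iSup_of_strictMono hu) fun b hb => ?_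
  obtain ⟨m, hm⟩ := Ordinal.lt_iSup_iff.1 hb
  obtain ⟨n, hmn, hn⟩ := hfreq m
  exact ⟨u n, hn, hm.le.trans (hu.monotone hmn), lt_iSup_of_strictMono hu n⟩

lemma exists_strictMono_succ_mem {E : ℕ → Ordinal.{0} → Set Ordinal.{0}}
    (hE : ∀ n x, x < omega1 → IsClub (E n x)) {b : Ordinal.{0}} (hb : b < omega1) :
    ∃ u : ℕ → Ordinal.{0}, u 0 = b ∧ StrictMono u ∧ (∀ n, u n < omega1) ∧
      ∀ n, u (n + 1) ∈ E n (u n) := by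
  have hnext : ∀ n x, ∃ y, x < omega1 → y ∈ E n x ∧ x < y ∧ y < omega1 := by
    intro n x
    by_cases hx : x < omega1
    · obtain ⟨y, hy, hxy, hy1⟩ := (hE n x hx).2.2 x hx
      exact ⟨y, fun _ => ⟨hy, hxy, hy1⟩⟩
    · exact ⟨0, fun h => absurd h hx⟩
  choose next hnext using hnext
  let u : ℕ → Ordinal.{0} := fun n => Nat.rec b next n
  have hlt : ∀ n, u n < omega1 := by
    intro n
    induction n with
    | zero => exact hb
    | succ n ih => exact (hnext n _ ih).2.2
  exact ⟨u, rfl, strictMono_nat_of_lt_succ fun n => (hnext n _ (hlt n)).2.1, hlt,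
    fun n => (hnext n _ (hlt n)).1⟩

lemma isClub_iInter {ι : Sort*} [Countable ι] {C : ι → Set Ordinal.{0}}
    (hC : ∀ i, IsClub (C i)) : IsClub (Iio omega1 ∩ ⋂ i, C i) := by
  rcases isEmpty_or_nonempty ι with hι | hι
  · simpa using isClub_Iio_omega1
  refine ⟨inter_subset_left, fun o ho hlim hcof => ⟨ho, mem_iInter.2 fun i => ?_⟩,
    fun b hb => ?_⟩
  · refine (hC i).2.1 o ho hlim fun b hb => ?_
    obtain ⟨c, hc, hbc, hco⟩ := hcof b hb
    exact ⟨c, mem_iInter.1 hc.2 i, hbc, hco⟩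
  · -- step `Nat.pair k m + 1` lands in `C (e k)`, so every `C i` is met cofinally
    obtain ⟨e, he⟩ := exists_surjective_nat ι
    obtain ⟨u, rfl, hu, hlt, hmem⟩ :=
      exists_strictMono_succ_mem (E := fun n _ => C (e n.unpair.1)) (fun _ _ _ => hC _) hb
    refine ⟨⨆ n, u n, ⟨iSup_lt_omega1 hlt, mem_iInter.2 fun i => ?_⟩,
      lt_iSup_of_strictMono hu 0, iSup_lt_omega1 hlt⟩
    obtain ⟨k, rfl⟩ := he i
    refine (hC (e k)).iSup_mem hu hlt fun m => ⟨Nat.pair k m + 1, ?_, ?_⟩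
    · exact (Nat.right_le_pair k m).trans (Nat.le_succ _)
    · simpa using hmem (Nat.pair k m)

lemma isClub_diag {D : Ordinal.{0} → Set Ordinal.{0}} (hD : ∀ γ < omega1, IsClub (D γ)) :
    IsClub {β | β < omega1 ∧ ∀ γ < β, β ∈ D γ} := by
  refine ⟨fun β hβ => hβ.1, fun o ho hlim hcof => ⟨ho, fun γ hγ => ?_⟩, fun b hb => ?_⟩
  · refine (hD γ (hγ.trans ho)).2.1 o ho hlim fun b hb => ?_
    obtain ⟨c, hc, hbc, hco⟩ := hcof (max (succ γ) b) (max_lt (hlim.succ_lt hγ) hb)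
    exact ⟨c, hc.2 γ (succ_le_iff.1 ((le_max_left _ _).trans hbc)),
      (le_max_right _ _).trans hbc, hco⟩
  · obtain ⟨u, rfl, hu, hlt, hmem⟩ :=
      exists_strictMono_succ_mem (E := fun _ x => Iio omega1 ∩ ⋂ γ : Iio x, D γ)
        (fun _ x hx => have := (countable_Iio_of_lt_omega1 hx).to_subtype
          isClub_iInter fun γ => hD γ (γ.2.trans hx)) hb
    refine ⟨⨆ n, u n, ⟨iSup_lt_omega1 hlt, fun γ hγ => ?_⟩,
      lt_iSup_of_strictMono hu 0, iSup_lt_omega1 hlt⟩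
    obtain ⟨m, hm⟩ := Ordinal.lt_iSup_iff.1 hγ
    refine (hD γ (hγ.trans (iSup_lt_omega1 hlt))).iSup_mem hu hlt fun k => ⟨max m k + 1, ?_, ?_⟩
    · exact (le_max_right m k).trans (Nat.le_succ _)
    · exact mem_iInter.1 (hmem (max m k)).2
        ⟨γ, hm.trans_le (hu.monotone (le_max_left m k))⟩

end Club

section ClubFilter

def clubFilter : Filter Ordinal.{0} :=
  Filter.ofCountableInter {s | ∃ C, IsClub C ∧ C ⊆ s}
    (fun S hS hSl => by
      choose! C hC hCs using show ∀ s ∈ S, ∃ C, IsClub C ∧ C ⊆ s from hSl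
      have := hS.to_subtype
      exact ⟨_, isClub_iInter fun s : S => hC s s.2,
        fun β hβ => Set.mem_sInter.2 fun s hs => hCs s hs (mem_iInter.1 hβ.2 ⟨s, hs⟩)⟩)
    (fun _ _ ⟨C, hC, hCs⟩ hst => ⟨C, hC, hCs.trans hst⟩)

lemma mem_clubFilter {s : Set Ordinal.{0}} : s ∈ clubFilter ↔ ∃ C, IsClub C ∧ C ⊆ s :=
  Iff.rfl

lemma eventually_lt_omega1 : ∀ᶠ β in clubFilter, β < omega1 :=
  ⟨_, isClub_Iio_omega1, subset_rfl⟩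

lemma eventually_gt {a : Ordinal.{0}} (ha : a < omega1) : ∀ᶠ β in clubFilter, a < β :=
  ⟨_, isClub_Ioo ha, fun _ hβ => hβ.1⟩

lemma eventually_forall_lt {P : Ordinal.{0} → Ordinal.{0} → Prop}
    (h : ∀ γ < omega1, ∀ᶠ β in clubFilter, P γ β) : ∀ᶠ β in clubFilter, ∀ γ < β, P γ β := by
  choose! C hC hCP using fun γ hγ => mem_clubFilter.1 (h γ hγ)
  exact ⟨_, isClub_diag hC, fun β hβ γ hγ => hCP γ (hγ.trans hβ.1) (hβ.2 γ hγ)⟩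

end ClubFilter

section Canonical

lemma canonical_iff {γ : Ordinal.{0}} {f : Ordinal.{0} → Ordinal.{0}} :
    Canonical γ f ↔
      (∀ β < γ, ∀ g, Canonical β g → ∀ᶠ x in clubFilter, g x < f x) ∧
      ∀ h : Ordinal.{0} → Ordinal.{0},
        (∀ β < γ, ∀ g, Canonical β g → ∀ᶠ x in clubFilter, g x < h x) →
          ∀ᶠ x in clubFilter, f x ≤ h x := by
  unfold Canonical
  rw [WellFounded.fix_eq]
  rfl

lemma Canonical.eventuallyEq {γ : Ordinal.{0}} {f f' : Ordinal.{0} → Ordinal.{0}}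
    (hf : Canonical γ f) (hf' : Canonical γ f') : f =ᶠ[clubFilter] f' := by
  rw [canonical_iff] at hf hf'
  exact EventuallyLE.antisymm (hf.2 f' hf'.1) (hf'.2 f hf.1)

lemma Canonical.congr {γ : Ordinal.{0}} {f f' : Ordinal.{0} → Ordinal.{0}}
    (hf : Canonical γ f) (he : f =ᶠ[clubFilter] f') : Canonical γ f' := by
  rw [canonical_iff] at hf ⊢
  refine ⟨fun β hβ g hg => ?_, fun h hh => ?_⟩
  · filter_upwards [hf.1 β hβ g hg, he] with x hx hfx
    rwa [← hfx]
  · filter_upwards [hf.2 h hh, he] with x hx hfx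
    rwa [← hfx]

end Canonical

section OrderType

open Ordinal

theorem type_inter_Iio {α : Type*} [LinearOrder α] [WellFoundedLT α] {s : Set α} {x : α}
    (hx : x ∈ s) : typeLT ↥(s ∩ Iio x) = typein (α := s) (· < ·) ⟨x, hx⟩ :=
  (StrictMono.orderIsoOfSurjective
    (fun a : ↥(s ∩ Iio x) => (⟨⟨a, a.2.1⟩, a.2.2⟩ : Iio (⟨x, hx⟩ : s)))
    (fun _ _ h => h) fun y => ⟨⟨y.1.1, y.1.2, y.2⟩, rfl⟩).ordinalType_congr

/-- `typeLT s` lies in `Ordinal.{1}`; when `s` is bounded it is the lift of a unique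
`Ordinal.{0}`, which is `otype s` (a junk value otherwise). -/
noncomputable def otype (s : Set Ordinal.{0}) : Ordinal.{0} :=
  Function.invFun lift.{1} (typeLT s)

lemma lift_otype {s : Set Ordinal.{0}} {b : Ordinal.{0}} (hs : s ⊆ Iio b) :
    lift.{1} (otype s) = typeLT s :=
  Function.invFun_eq (mem_range_lift_of_le ((type_mono hs).trans (type_lt_Iio b).le))

lemma IsOtypOf.otype_eq {o : Ordinal.{0}} {s : Set Ordinal.{0}} (h : IsOtypOf o s) :
    otype s = o := by
  obtain ⟨e, hmono, hmem, hsurj⟩ := h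
  have hiso : Iio o ≃o s :=
    StrictMono.orderIsoOfSurjective (fun i => ⟨e i, hmem i i.2⟩) (fun i j hij => hmono i j hij j.2)
      fun y => by
        obtain ⟨i, hi, hei⟩ := hsurj y.1 y.2
        exact ⟨⟨i, hi⟩, Subtype.ext hei⟩
  rw [otype, ← hiso.ordinalType_congr, type_lt_Iio]
  exact Function.leftInverse_invFun (fun _ _ => lift_inj.1) o

lemma inter_Iio_inter_Iio {α : Type*} [LinearOrder α] {s : Set α} {a b : α} (h : a ≤ b) :
    s ∩ Iio b ∩ Iio a = s ∩ Iio a := by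
  rw [inter_assoc, Iio_inter_Iio, min_eq_right h]

variable {S : Set Ordinal.{0}} {ζ ξ : Ordinal.{0}}

lemma otype_inter_Iio_lt (hζ : ζ ∈ S) (hζξ : ζ < ξ) :
    otype (S ∩ Iio ζ) < otype (S ∩ Iio ξ) := by
  rw [← lift_lt.{1}, lift_otype inter_subset_right, lift_otype inter_subset_right,
    ← inter_Iio_inter_Iio hζξ.le, type_inter_Iio (show ζ ∈ S ∩ Iio ξ from ⟨hζ, hζξ⟩)]
  exact typein_lt_type _ _

lemma otype_inter_Iio_le {c : Ordinal.{0}}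
    (h : ∀ ζ ∈ S, ζ < ξ → otype (S ∩ Iio ζ) < c) : otype (S ∩ Iio ξ) ≤ c := by
  by_contra! hc
  rw [← lift_lt.{1}, lift_otype inter_subset_right] at hc
  obtain ⟨⟨ζ, hζ⟩, hζc⟩ := typein_surj _ hc
  have hlt := lift_lt.{1}.2 (h ζ hζ.1 hζ.2)
  rw [lift_otype inter_subset_right, ← inter_Iio_inter_Iio hζ.2.le, type_inter_Iio hζ, hζc] at hlt
  exact hlt.false

end OrderType

theorem canonical_otype_image_inter_Iio {g : Ordinal.{0} → Ordinal.{0}} {ξ : Ordinal.{0}}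
    (hsurj : ∀ ζ < ξ, ∃ β < omega1, g β = ζ) :
    Canonical ξ fun β => otype (g '' Iio β ∩ Iio ξ) := by
  induction ξ using WellFoundedLT.induction with
  | _ ξ IH =>
    have IH' (ζ) (hζ : ζ < ξ) : Canonical ζ fun β => otype (g '' Iio β ∩ Iio ζ) :=
      IH ζ hζ fun η hη => hsurj η (hη.trans hζ)
    rw [canonical_iff]
    refine ⟨fun ζ hζ w hw => ?_, fun h hh => ?_⟩
    · obtain ⟨β₀, hβ₀, rfl⟩ := hsurj ζ hζ
      filter_upwards [hw.eventuallyEq (IH' _ hζ), eventually_gt hβ₀] with β hwβ hβ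
      rw [hwβ]
      exact otype_inter_Iio_lt (mem_image_of_mem g hβ) hζ
    · have hdom : ∀ γ < omega1, ∀ᶠ β in clubFilter,
          g γ < ξ → otype (g '' Iio β ∩ Iio (g γ)) < h β :=
        fun γ _ => eventually_imp_distrib_left.2 fun hγ => hh _ hγ _ (IH' _ hγ)
      filter_upwards [eventually_forall_lt hdom] with β hβ
      refine otype_inter_Iio_le ?_
      rintro _ ⟨γ, hγ, rfl⟩ hγξ
      exact hβ γ hγ hγξ

theorem stmt_7_general (α : Ordinal.{0})
    (g : Ordinal.{0} → Ordinal.{0})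
    (hmaps : ∀ β, β < omega1 → g β < α)
    (hsurj : ∀ ξ, ξ < α → ∃ β, β < omega1 ∧ g β = ξ)
    (f : Ordinal.{0} → Ordinal.{0})
    (hf : ∀ β, β < omega1 → IsOtypOf (f β) (g '' Set.Iio β)) :
    Canonical α f := by
  refine (canonical_otype_image_inter_Iio hsurj).congr ?_
  filter_upwards [eventually_lt_omega1] with β hβ
  have himg : g '' Iio β ⊆ Iio α := image_subset_iff.2 fun γ hγ => hmaps γ (hγ.trans hβ)
  rw [inter_eq_left.2 himg, (hf β hβ).otype_eq]

theorem stmt_7 (α : Ordinal.{0}) (h1 : omega1 ≤ α) (h2 : α < omega2)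
    (g : Ordinal.{0} → Ordinal.{0})
    (hmaps : ∀ β, β < omega1 → g β < α)
    (hinj : ∀ β β', β < omega1 → β' < omega1 → g β = g β' → β = β')
    (hsurj : ∀ ξ, ξ < α → ∃ β, β < omega1 ∧ g β = ξ)
    (f : Ordinal.{0} → Ordinal.{0})
    (hf : ∀ β, β < omega1 → IsOtypOf (f β) (g '' Set.Iio β)) :
    Canonical α f :=
  stmt_7_general α g hmaps hsurj f hf

end P746
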